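/- arXiv:1409.5634 — 7 statements merged into one kernel-verified Lean document; each statement's English description precedes it below -/
import Mathlib

section
/- Suppose q ≢ 1 (mod 3). If x ∈ E satisfies T(x) = 0 and T(x^{q+1}) = 0, then x lies in the subfield F = {x ∈ E : x^q = x}; moreover, if q ≡ 2 (mod 3) then x = 0. -/
/-- Let `q = p^h` be a prime power with `q ≢ 1 (mod 3)`,
`E = 𝔽_{q³}` and `T x = x^{q²} + x^q + x` the relative trace.  If `x ∈ E` satisfies
`T x = 0` and `T (x^{q+1}) = 0`, then `x` lies in the subfield `F = {x : x^q = x}`;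
moreover if `q ≡ 2 (mod 3)` then `x = 0`. -/
theorem stmt_2 {p h q : ℕ} (hp : p.Prime) (hh : 0 < h) (hq : q = p ^ h)
    (hq3 : q % 3 ≠ 1)
    {E : Type*} [Field E] [Fintype E] (hE : Fintype.card E = q ^ 3)
    (T : E → E) (hT : ∀ x, T x = x ^ q ^ 2 + x ^ q + x)
    (x : E) (h1 : T x = 0) (h2 : T (x ^ (q + 1)) = 0) :
    x ^ q = x ∧ (q % 3 = 2 → x = 0) := by
  have hq0 : 2 ≤ q := by
    rw [hq]
    calc 2 ≤ p := hp.two_le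
    _ ≤ p ^ h := Nat.le_self_pow hh.ne' p
  -- x ^ (q^3) = x
  have hx3 : x ^ q ^ 3 = x := by
    rw [← hE]; exact FiniteField.pow_card x
  have e1 : x ^ q ^ 2 + x ^ q + x = 0 := by rw [← hT]; exact h1
  have e2 : (x ^ (q + 1)) ^ q ^ 2 + (x ^ (q + 1)) ^ q + x ^ (q + 1) = 0 := by
    rw [← hT]; exact h2
  have r1 : (x ^ (q + 1)) ^ q ^ 2 = x ^ q ^ 3 * x ^ q ^ 2 := by
    rw [← pow_mul, ← pow_add]; congr 1; ring
  have r2 : (x ^ (q + 1)) ^ q = x ^ q ^ 2 * x ^ q := by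
    rw [← pow_mul, ← pow_add]; congr 1; ring
  have r3 : x ^ (q + 1) = x ^ q * x := by rw [pow_succ]
  rw [r1, r2, r3, hx3] at e2
  -- a² + ab + b² = 0
  have hkey : x ^ 2 + x * x ^ q + (x ^ q) ^ 2 = 0 := by
    linear_combination (x + x ^ q) * e1 - e2
  have hcube : (x ^ q) ^ 3 = x ^ 3 := by
    linear_combination (x ^ q - x) * hkey
  -- the characteristic of E is p
  haveI : CharP E (ringChar E) := ringChar.charP E
  have hrp : ringChar E = p := by
    have hrprime : (ringChar E).Prime := CharP.char_is_prime E (ringChar E)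
    obtain ⟨n, -, hcard⟩ := FiniteField.card E (ringChar E)
    have : ringChar E ∣ p ^ (3 * h) := by
      have : ringChar E ∣ (ringChar E) ^ (n : ℕ) :=
        dvd_pow_self _ (by positivity)
      rwa [← hcard, hE, hq, ← pow_mul, Nat.mul_comm] at this
    have hdvd : ringChar E ∣ p := hrprime.dvd_of_dvd_pow this
    exact (Nat.prime_dvd_prime_iff_eq hrprime hp).mp hdvd
  haveI hcp : CharP E p := hrp ▸ ringChar.charP E
  haveI : Fact p.Prime := ⟨hp⟩
  have hq3' : q % 3 = 0 ∨ q % 3 = 2 := by omega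
  rcases hq3' with h0 | h2'
  · -- characteristic 3 case
    have hp3 : p = 3 := by
      have h3q : (3 : ℕ) ∣ q := Nat.dvd_of_mod_eq_zero h0
      rw [hq] at h3q
      have := Nat.Prime.dvd_of_dvd_pow Nat.prime_three h3q
      exact ((Nat.prime_dvd_prime_iff_eq Nat.prime_three hp).mp this).symm
    haveI : CharP E 3 := hp3 ▸ hcp
    haveI : Fact (Nat.Prime 3) := ⟨Nat.prime_three⟩
    have hsub : (x ^ q - x) ^ 3 = 0 := by
      rw [sub_pow_char, hcube, sub_self]
    have hxq : x ^ q = x := by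
      have := pow_eq_zero_iff (n := 3) (by norm_num) |>.mp hsub
      exact sub_eq_zero.mp this
    exact ⟨hxq, fun hm => absurd (h0 ▸ hm) (by omega)⟩
  · -- q ≡ 2 mod 3 case
    have hp3 : p ≠ 3 := by
      intro hp3
      rw [hq, hp3] at h2'
      have : (3 : ℕ) ∣ 3 ^ h := dvd_pow_self 3 hh.ne'
      omega
    have hx0 : x = 0 := by
      by_cases hx : x = 0
      · exact hx
      exfalso
      -- x^q = x
      have hu0 : x ^ q * x⁻¹ ≠ 0 := by
        apply mul_ne_zero (pow_ne_zero _ hx) (inv_ne_zero hx)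
      have hu3 : (x ^ q * x⁻¹) ^ 3 = 1 := by
        rw [mul_pow, hcube, ← mul_pow, mul_inv_cancel₀ hx, one_pow]
      have hum : (x ^ q * x⁻¹) ^ (q ^ 3 - 1) = 1 := by
        rw [← hE]; exact FiniteField.pow_card_sub_one_eq_one _ hu0
      have hmod : q ^ 3 % 3 = 2 := by
        rw [Nat.pow_mod, h2']
      have hq3pos : 1 ≤ q ^ 3 := Nat.one_le_pow _ _ (by omega)
      have hgcd : Nat.gcd 3 (q ^ 3 - 1) = 1 := by
        rw [Nat.gcd_rec]
        have : (q ^ 3 - 1) % 3 = 1 := by omega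
        rw [this]
        rfl
      have hdvd : orderOf (x ^ q * x⁻¹) ∣ 1 := by
        rw [← hgcd]
        exact Nat.dvd_gcd (orderOf_dvd_of_pow_eq_one hu3)
          (orderOf_dvd_of_pow_eq_one hum)
      have hu1 : x ^ q * x⁻¹ = 1 := orderOf_eq_one_iff.mp (Nat.dvd_one.mp hdvd)
      have hxq : x ^ q = x := (mul_inv_eq_one₀ hx).mp hu1
      -- then 3x = 0
      have hxq2 : x ^ q ^ 2 = x := by
        rw [pow_two, pow_mul, hxq, hxq]
      rw [hxq2, hxq] at e1
      have h3x : (3 : E) * x = 0 := by linear_combination e1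
      have h30 : (3 : E) ≠ 0 := by
        intro hc
        have : (p : ℕ) ∣ 3 := by
          have := (CharP.cast_eq_zero_iff E p 3).mp hc
          exact_mod_cast this
        exact hp3 ((Nat.prime_dvd_prime_iff_eq hp Nat.prime_three).mp this)
      exact hx (by
        rcases mul_eq_zero.mp h3x with hc | hc
        · exact absurd hc h30
        · exact hc)
    exact ⟨by rw [hx0]; exact zero_pow (by omega), fun _ => hx0⟩
end

section
/- Suppose q is odd and q ≢ 1 (mod 3). If x ∈ E satisfies T(x) = 0 and T(x²) = 0, then x lies in the subfield F = {x ∈ E : x^q = x}; moreover, if q ≡ 2 (mod 3) (equivalently q ≡ 5 (mod 6)) then x = 0. -/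
/-- Let `q = p^h` be an odd prime power with `q ≢ 1 (mod 3)`,
`E = 𝔽_{q³}` and `T x = x^{q²} + x^q + x` the relative trace.  If `x ∈ E` satisfies
`T x = 0` and `T (x²) = 0`, then `x` lies in the subfield `F = {x : x^q = x}`;
moreover if `q ≡ 2 (mod 3)` then `x = 0`. -/
theorem stmt_3 {p h q : ℕ} (hp : p.Prime) (hh : 0 < h) (hq : q = p ^ h)
    (hodd : Odd q) (hq3 : q % 3 ≠ 1)
    {E : Type*} [Field E] [Fintype E] (hE : Fintype.card E = q ^ 3)
    (T : E → E) (hT : ∀ x, T x = x ^ q ^ 2 + x ^ q + x)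
    (x : E) (h1 : T x = 0) (h2 : T (x ^ 2) = 0) :
    x ^ q = x ∧ (q % 3 = 2 → x = 0) := by
  classical
  have hq2 : 2 ≤ q := by rw [hq]; exact Nat.one_lt_pow hh.ne' hp.one_lt
  have hcard : ((q ^ 3 : ℕ) : E) = 0 := by
    rw [← hE]; exact FiniteField.cast_card_eq_zero E
  have hoddq3 : (q ^ 3) % 2 = 1 := Nat.odd_iff.mp (hodd.pow)
  have h2ne : (2 : E) ≠ 0 := by
    intro h20
    have hdm : q ^ 3 = 2 * (q ^ 3 / 2) + 1 := by omega
    have hcc : ((2 * (q ^ 3 / 2) + 1 : ℕ) : E) = 0 := by rw [← hdm]; exact hcard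
    push_cast at hcc
    exact one_ne_zero (by linear_combination hcc - ((q ^ 3 / 2 : ℕ) : E) * h20)
  set a := x with ha
  set b := x ^ q with hb
  set c := x ^ q ^ 2 with hc
  have s1 : c + b + a = 0 := by rw [hT] at h1; exact h1
  have s2 : c ^ 2 + b ^ 2 + a ^ 2 = 0 := by
    rw [hT] at h2
    have e1 : (x ^ 2) ^ q ^ 2 = c ^ 2 := by rw [hc, ← pow_mul, ← pow_mul, Nat.mul_comm]
    have e2 : (x ^ 2) ^ q = b ^ 2 := by rw [hb, ← pow_mul, ← pow_mul, Nat.mul_comm]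
    rw [e1, e2] at h2; exact h2
  have he2 : a * b + b * c + c * a = 0 := by
    have h2e : (2 : E) * (a * b + b * c + c * a) = 0 := by
      linear_combination (a + b + c) * s1 - s2
    rcases mul_eq_zero.mp h2e with h' | h'
    · exact absurd h' h2ne
    · exact h'
  have key : b ^ 3 = a ^ 3 := by
    linear_combination (b ^ 2 - a ^ 2) * s1 + (a - b) * he2
  have hq3mod : q ^ 3 % 3 = q % 3 := by
    rw [Nat.pow_mod]
    have h3 : q % 3 = 0 ∨ q % 3 = 2 := by omega
    rcases h3 with h3 | h3 <;> rw [h3] <;> norm_num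
  have hq38 : 8 ≤ q ^ 3 := by
    calc (8:ℕ) = 2 ^ 3 := by norm_num
    _ ≤ q ^ 3 := Nat.pow_le_pow_left hq2 3
  have hcop : Nat.Coprime 3 (q ^ 3 - 1) := by
    rw [Nat.Prime.coprime_iff_not_dvd (by norm_num)]
    omega
  have hxq : x ^ q = x := by
    by_cases hx : x = 0
    · rw [hx, zero_pow (by omega : q ≠ 0)]
    · have hbne : b ≠ 0 := pow_ne_zero _ hx
      set u : Eˣ := Units.mk0 b hbne * (Units.mk0 x hx)⁻¹ with hu
      have hu3 : u ^ 3 = 1 := by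
        ext
        push_cast [hu]
        rw [Units.val_mk0, Units.val_mk0]
        field_simp
        linear_combination key
      have hdvd1 : orderOf u ∣ 3 := orderOf_dvd_of_pow_eq_one hu3
      have hdvd2 : orderOf u ∣ q ^ 3 - 1 := by
        have := orderOf_dvd_card (G := Eˣ) (x := u)
        rwa [Fintype.card_units, hE] at this
      have hord1 : orderOf u = 1 :=
        Nat.eq_one_of_dvd_one (hcop ▸ Nat.dvd_gcd hdvd1 hdvd2)
      have hu1 : u = 1 := orderOf_eq_one_iff.mp hord1
      have hbx : b * x⁻¹ = 1 := by
        have hv := congrArg (Units.val) hu1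
        push_cast [hu] at hv
        rw [Units.val_mk0, Units.val_mk0] at hv
        simpa using hv
      field_simp at hbx
      exact hbx
  refine ⟨hxq, ?_⟩
  intro hqm2
  by_contra hx
  have hx2 : x ^ q ^ 2 = x := by
    rw [sq, pow_mul, hxq, hxq]
  have h3x : x * 3 = 0 := by
    have := s1
    rw [hc, hb] at this
    rw [hx2, hxq] at this
    linear_combination this
  have h30 : (3 : E) = 0 := by
    rcases mul_eq_zero.mp h3x with h' | h'
    · exact absurd h' hx
    · exact h'
  have hm2 : q ^ 3 % 3 = 2 := by omega
  have hdm : q ^ 3 = 3 * (q ^ 3 / 3) + 2 := by omega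
  have hcc : ((3 * (q ^ 3 / 3) + 2 : ℕ) : E) = 0 := by rw [← hdm]; exact hcard
  push_cast at hcc
  exact one_ne_zero (show (1:E) = 0 by
    linear_combination h30 - hcc + ((q ^ 3 / 3 : ℕ) : E) * h30)
end

section
/- Assume q ≡ 1 (mod 4) and q ≢ 1 (mod 3). For every λ ∈ E with λ ≠ 0, the number of nonzero y ∈ E with T(λ·y²) = 0 is exactly q² − 1. Equivalently, the quadratic form y ↦ T(λ·y²) on E, viewed as a 3-dimensional F-vector space, has exactly q + 1 isotropic projective points, and hence is nondegenerate (its set of isotropic points is a nondegenerate conic). -/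
open scoped Classical

/-!
The map `x ↦ T(λx)` is additive, its image consists of elements fixed by `x ↦ x ^ q`, of which
there are at most `q`, and its kernel `K` consists of roots of a polynomial of degree `q²`;
hence `|K| = q²`. Moreover `K` is stable under multiplication by `𝔽_q`, and for odd `q` some
`t ∈ 𝔽_q` is a non-square in `E` (a norm of a non-square, with the odd exponent `q² + q + 1`).
So the quadratic character sums to zero over `K \ {0}`, and every element of `K \ {0}` has on
average one square root: the `y ≠ 0` with `λy² ∈ K` number `|K \ {0}| = q² - 1`.
-/

open Finset Polynomial

section QuadraticCount

variable {F : Type*} [Field F] [Fintype F]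

theorem ringChar_ne_two_of_odd_card (hF : Odd (Fintype.card F)) : ringChar F ≠ 2 := by
  rwa [Ne, FiniteField.even_card_iff_char_two, ← Nat.even_iff, Nat.not_even_iff_odd]

theorem sum_quadraticChar_eq_zero_of_mul_mem_iff {S : Finset F} {t : F} (ht : ¬IsSquare t)
    (hS : ∀ x, t * x ∈ S ↔ x ∈ S) : ∑ x ∈ S, quadraticChar F x = 0 := by
  have ht0 : t ≠ 0 := by rintro rfl; exact ht IsSquare.zero
  have hflip : ∑ x ∈ S, quadraticChar F (t * x) = ∑ x ∈ S, quadraticChar F x :=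
    sum_nbij' (t * ·) (t⁻¹ * ·) (fun x hx => (hS x).2 hx)
      (fun y hy => (hS _).1 (by rwa [mul_inv_cancel_left₀ ht0]))
      (fun x _ => inv_mul_cancel_left₀ ht0 x) (fun y _ => mul_inv_cancel_left₀ ht0 y)
      fun _ _ => rfl
  simp only [map_mul, quadraticChar_neg_one_iff_not_isSquare.2 ht, neg_one_mul,
    sum_neg_distrib] at hflip
  linarith

theorem card_filter_sq_mem (hF : ringChar F ≠ 2) (S : Finset F) :
    (#{y : F | y ^ 2 ∈ S} : ℤ) = ∑ x ∈ S, quadraticChar F x + #S := by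
  have hfib : #{y : F | y ^ 2 ∈ S} = ∑ x ∈ S, #{y ∈ {y : F | y ^ 2 ∈ S} | y ^ 2 = x} :=
    card_eq_sum_card_fiberwise fun y hy => (mem_filter.1 hy).2
  rw [hfib, Nat.cast_sum, card_eq_sum_ones S, Nat.cast_sum, ← sum_add_distrib]
  refine sum_congr rfl fun x hx => ?_
  rw [Nat.cast_one, ← quadraticChar_card_sqrts hF x]
  congr 2
  ext y
  simp +contextual [hx]

theorem card_filter_sq_mem_eq_card_of_mul_mem_iff (hF : ringChar F ≠ 2) {S : Finset F} {t : F}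
    (ht : ¬IsSquare t) (hS : ∀ x, t * x ∈ S ↔ x ∈ S) : #{y : F | y ^ 2 ∈ S} = #S := by
  have hcard := card_filter_sq_mem hF S
  rw [sum_quadraticChar_eq_zero_of_mul_mem_iff ht hS, zero_add] at hcard
  exact_mod_cast hcard

theorem exists_pow_eq_self_not_isSquare {q n : ℕ} (hq : Odd q) (hn : Odd n)
    (hF : Fintype.card F = q ^ n) : ∃ t : F, t ^ q = t ∧ ¬IsSquare t := by
  obtain ⟨g, hg⟩ := FiniteField.exists_nonsquare (ringChar_ne_two_of_odd_card (hF ▸ hq.pow))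
  have hg0 : g ≠ 0 := by rintro rfl; exact hg IsSquare.zero
  set N := ∑ i ∈ range n, q ^ i
  have hN : N * (q - 1) = q ^ n - 1 := by
    zify [hq.pos, Nat.one_le_pow n q hq.pos]
    push_cast [N]
    exact geom_sum_mul (q : ℤ) n
  have hNodd : Odd N := by
    rwa [Finset.odd_sum_iff_odd_card_odd, filter_true_of_mem fun i _ => hq.pow, card_range]
  refine ⟨g ^ N, ?_, ?_⟩
  · have hfix : (g ^ N) ^ (q - 1) = 1 := by
      rw [← pow_mul, hN, ← hF, FiniteField.pow_card_sub_one_eq_one g hg0]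
    rw [← Nat.sub_add_cancel hq.pos, pow_succ, hfix, one_mul]
  · rw [← quadraticChar_neg_one_iff_not_isSquare, map_pow,
      quadraticChar_neg_one_iff_not_isSquare.2 hg, hNodd.neg_one_pow]

end QuadraticCount

theorem card_filter_pow_eq_self_le {K : Type*} [Field K] [Fintype K] {q : ℕ} (hq : 1 < q) :
    #{c : K | c ^ q = c} ≤ q := by
  refine (card_le_degree_of_subset_roots fun c hc => ?_).trans
    (FiniteField.X_pow_card_sub_X_natDegree_eq K hq).le
  simp only [Finset.mem_val, mem_filter, mem_univ, true_and] at hc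
  simp [mem_roots (FiniteField.X_pow_card_sub_X_ne_zero K hq), hc]

section CubicTrace

variable {E : Type*} [Field E] (p h : ℕ) [ExpChar E p]

def cubicTrace : E →+ E :=
  (iterateFrobenius E p (2 * h) : E →+ E) + (iterateFrobenius E p h : E →+ E) +
    AddMonoidHom.id E

theorem cubicTrace_apply (x : E) : cubicTrace p h x = x ^ (p ^ h) ^ 2 + x ^ p ^ h + x := by
  simp [cubicTrace, iterateFrobenius_def, ← pow_mul, mul_comm]

variable {p h}

theorem cubicTrace_mul_of_pow_eq_self {t : E} (ht : t ^ p ^ h = t) (x : E) :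
    cubicTrace p h (t * x) = t * cubicTrace p h x := by
  have ht2 : t ^ (p ^ h) ^ 2 = t := by rw [sq, pow_mul, ht, ht]
  simp only [cubicTrace_apply, mul_pow, ht, ht2]
  ring

theorem cubicTrace_pow_eq_self [Fintype E] (hE : Fintype.card E = (p ^ h) ^ 3) (x : E) :
    cubicTrace p h x ^ p ^ h = cubicTrace p h x := by
  have hx : x ^ (p ^ h) ^ 3 = x := hE ▸ FiniteField.pow_card x
  simp only [cubicTrace_apply, add_pow_expChar_pow]
  generalize p ^ h = q at hx ⊢
  rw [← pow_mul, ← pow_succ, ← pow_mul, ← sq, hx]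
  ring

theorem card_filter_cubicTrace_mul_eq_zero_le [Fintype E] (hq : 1 < p ^ h) {lam : E}
    (hlam : lam ≠ 0) : #{x : E | cubicTrace p h (lam * x) = 0} ≤ (p ^ h) ^ 2 := by
  have heval (x : E) : cubicTrace p h (lam * x) = (C (lam ^ (p ^ h) ^ 2) * X ^ (p ^ h) ^ 2 +
      C (lam ^ p ^ h) * X ^ p ^ h + C lam * X).eval x := by
    simp [cubicTrace_apply, mul_pow]
  simp only [heval]
  generalize p ^ h = q at hq ⊢
  set f : E[X] := C (lam ^ q ^ 2) * X ^ q ^ 2 + C (lam ^ q) * X ^ q + C lam * X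
  have hq2 : q < q ^ 2 := by nlinarith
  have hf : f.natDegree = q ^ 2 := by
    simp only [f]
    compute_degree!
    · simp [hq2.ne', hq.ne', hlam]
    all_goals omega
  have hf0 : f ≠ 0 := fun h0 => by simp [h0] at hf; omega
  refine hf ▸ card_le_degree_of_subset_roots fun x hx => ?_
  simpa [mem_roots hf0] using hx

theorem card_filter_cubicTrace_mul_eq_zero [Fintype E] (hq : 1 < p ^ h)
    (hE : Fintype.card E = (p ^ h) ^ 3) {lam : E} (hlam : lam ≠ 0) :
    #{x : E | cubicTrace p h (lam * x) = 0} = (p ^ h) ^ 2 := by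
  set L := (cubicTrace p h).comp (AddMonoidHom.mulLeft lam)
  have hker : Nat.card L.ker = #{x : E | cubicTrace p h (lam * x) = 0} :=
    Nat.subtype_card _ fun x => by simp [L]
  have hrange : Nat.card L.range ≤ p ^ h := by
    refine (Nat.card_mono (Finset.finite_toSet _) ?_).trans
      ((Nat.card_eq_finsetCard _).trans_le (card_filter_pow_eq_self_le hq))
    rintro _ ⟨x, rfl⟩
    simpa [L] using cubicTrace_pow_eq_self hE (lam * x)
  have hcard := L.ker.card_mul_index
  rw [AddSubgroup.index_ker, hker, Nat.card_eq_fintype_card (α := E), hE] at hcard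
  have hge : (p ^ h) ^ 3 ≤ #{x : E | cubicTrace p h (lam * x) = 0} * p ^ h :=
    hcard ▸ Nat.mul_le_mul_left _ hrange
  refine le_antisymm (card_filter_cubicTrace_mul_eq_zero_le hq hlam)
    (Nat.le_of_mul_le_mul_right ?_ (by omega : 0 < p ^ h))
  rwa [← pow_succ]

end CubicTrace

theorem stmt_5_general {p h q : ℕ} (hp : p.Prime) (hh : 0 < h) (hq : q = p ^ h)
    (hq4 : q % 4 = 1)
    {E : Type*} [Field E] [Fintype E] (hE : Fintype.card E = q ^ 3)
    (T : E → E) (hT : ∀ x, T x = x ^ q ^ 2 + x ^ q + x) :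
    ∀ lam : E, lam ≠ 0 →
      (Finset.univ.filter fun y : E => y ≠ 0 ∧ T (lam * y ^ 2) = 0).card
        = q ^ 2 - 1 := by
  intro lam hlam
  subst hq
  have : Fact p.Prime := ⟨hp⟩
  have : CharP E p := charP_of_card_eq_prime_pow (by rw [hE, ← pow_mul])
  obtain rfl : T = cubicTrace p h := funext fun x => (hT x).trans (cubicTrace_apply p h x).symm
  have hodd : Odd (p ^ h) := Nat.odd_iff.2 (by omega)
  obtain ⟨t, htq, ht⟩ := exists_pow_eq_self_not_isSquare hodd (by decide) hE
  have ht0 : t ≠ 0 := by rintro rfl; exact ht IsSquare.zero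
  set S : Finset E := {x | x ≠ 0 ∧ cubicTrace p h (lam * x) = 0}
  have hS : #S = (p ^ h) ^ 2 - 1 := by
    have hS' : S = ({x | cubicTrace p h (lam * x) = 0} : Finset E).erase 0 := by
      ext x; simp [S]
    rw [hS', card_erase_of_mem (by simp), card_filter_cubicTrace_mul_eq_zero
      (Nat.one_lt_pow hh.ne' hp.one_lt) hE hlam]
  have hstable (x : E) : t * x ∈ S ↔ x ∈ S := by
    simp [S, mul_left_comm lam t, cubicTrace_mul_of_pow_eq_self htq, ht0]
  rw [← hS, ← card_filter_sq_mem_eq_card_of_mul_mem_iff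
    (ringChar_ne_two_of_odd_card (hE ▸ hodd.pow)) ht hstable]
  congr 1
  ext y
  simp [S]

/-- Let `q = p^h` be a prime power with `q ≡ 1 (mod 4)` and
`q ≢ 1 (mod 3)`, `E = 𝔽_{q³}` and `T x = x^{q²} + x^q + x` the relative trace.
For every nonzero `λ ∈ E`, the number of nonzero `y ∈ E` with `T(λ·y²) = 0` is
exactly `q² − 1` (equivalently, the quadratic form `y ↦ T(λ·y²)` on `E`, a
3-dimensional `F`-space, has exactly `q + 1` isotropic projective points: its
isotropic points form a nondegenerate conic). -/
theorem stmt_5 {p h q : ℕ} (hp : p.Prime) (hh : 0 < h) (hq : q = p ^ h)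
    (hq4 : q % 4 = 1) (hq3 : q % 3 ≠ 1)
    {E : Type*} [Field E] [Fintype E] (hE : Fintype.card E = q ^ 3)
    (T : E → E) (hT : ∀ x, T x = x ^ q ^ 2 + x ^ q + x) :
    ∀ lam : E, lam ≠ 0 →
      (Finset.univ.filter fun y : E => y ≠ 0 ∧ T (lam * y ^ 2) = 0).card
        = q ^ 2 - 1 :=
  stmt_5_general hp hh hq hq4 hE T hT
end

section
/- Assume q ≡ 1 (mod 4) and q ≢ 1 (mod 3). The symmetric F-bilinear form on E (viewed as a 3-dimensional F-vector space) given by (x, y) ↦ T(xy) is nondegenerate and has square discriminant: for every F-basis (b₁, b₂, b₃) of E, the determinant of the Gram matrix [T(b_i·b_j)] is a nonzero square in F. -/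
open Polynomial in
/-- A nonzero linearized polynomial `c₀ x + c₁ x^q + c₂ x^{q²}` cannot vanish on all of a
field with `q³` elements. -/
lemma aux_lin {q : ℕ} (hq2 : 2 ≤ q) {E : Type*} [Field E] [Fintype E]
    (hE : Fintype.card E = q ^ 3)
    (c₀ c₁ c₂ : E) (hz : ∀ x : E, c₀ * x + c₁ * x ^ q + c₂ * x ^ q ^ 2 = 0) :
    c₀ = 0 ∧ c₁ = 0 ∧ c₂ = 0 := by
  set P : E[X] := C c₀ * X + C c₁ * X ^ q + C c₂ * X ^ q ^ 2 with hP
  have h1q : (1 : ℕ) < q := hq2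
  have hqq2 : q < q ^ 2 := by nlinarith
  have hdeg : P.natDegree ≤ q ^ 2 := by
    apply Polynomial.natDegree_add_le_of_degree_le
    · apply Polynomial.natDegree_add_le_of_degree_le
      · exact le_trans (Polynomial.natDegree_C_mul_le _ _)
          (by simpa using le_of_lt (lt_trans h1q hqq2))
      · exact le_trans (Polynomial.natDegree_C_mul_le _ _)
          (by simpa using le_of_lt hqq2)
    · exact le_trans (Polynomial.natDegree_C_mul_le _ _) (by simp)
  have hdeg' : P.natDegree < Fintype.card E := by
    rw [hE]
    refine lt_of_le_of_lt hdeg (by nlinarith)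
  have hP0 : P = 0 := by
    apply Polynomial.eq_zero_of_natDegree_lt_card_of_eval_eq_zero P Function.injective_id
      _ hdeg'
    intro x
    simp only [P, Polynomial.eval_add, Polynomial.eval_mul, Polynomial.eval_C,
      Polynomial.eval_X, Polynomial.eval_pow, id]
    exact hz x
  have f1 : ¬ (1 : ℕ) = q := by omega
  have f2 : ¬ q = 1 := by omega
  have f3 : ¬ (1 : ℕ) = q ^ 2 := by nlinarith
  have f4 : ¬ q ^ 2 = 1 := by nlinarith
  have f5 : ¬ q = q ^ 2 := by nlinarith
  have f6 : ¬ q ^ 2 = q := by nlinarith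
  have e0 : c₀ = 0 := by
    have := congrArg (fun Q => Polynomial.coeff Q 1) hP0
    simpa [P, Polynomial.coeff_X_pow, f1, f2, f3, f4, f5, f6] using this
  have e1 : c₁ = 0 := by
    have := congrArg (fun Q => Polynomial.coeff Q q) hP0
    simpa [P, Polynomial.coeff_X_pow, Polynomial.coeff_X, f1, f2, f3, f4, f5, f6] using this
  have e2 : c₂ = 0 := by
    have := congrArg (fun Q => Polynomial.coeff Q (q ^ 2)) hP0
    simpa [P, Polynomial.coeff_X_pow, Polynomial.coeff_X, f1, f2, f3, f4, f5, f6] using this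
  exact ⟨e0, e1, e2⟩

/-- Let `q = p^h` be a prime power with `q ≡ 1 (mod 4)` and
`q ≢ 1 (mod 3)`, `E = 𝔽_{q³}` and `T x = x^{q²} + x^q + x` the relative trace.
The symmetric `F`-bilinear form `(x, y) ↦ T(xy)` on `E` (a 3-dimensional vector
space over the subfield `F = {x : x^q = x}`) is nondegenerate, and for every
`F`-basis `(b₁, b₂, b₃)` of `E` the determinant of the Gram matrix `[T(bᵢ·bⱼ)]`
is a nonzero square of `F`. -/
theorem stmt_6 {p h q : ℕ} (hp : p.Prime) (hh : 0 < h) (hq : q = p ^ h)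
    (hq4 : q % 4 = 1) (hq3 : q % 3 ≠ 1)
    {E : Type*} [Field E] [Fintype E] (hE : Fintype.card E = q ^ 3)
    (T : E → E) (hT : ∀ x, T x = x ^ q ^ 2 + x ^ q + x) :
    (∀ x : E, (∀ y : E, T (x * y) = 0) → x = 0) ∧
    ∀ b₁ b₂ b₃ : E,
      (∀ c₁ c₂ c₃ : E, c₁ ^ q = c₁ → c₂ ^ q = c₂ → c₃ ^ q = c₃ →
        c₁ * b₁ + c₂ * b₂ + c₃ * b₃ = 0 → c₁ = 0 ∧ c₂ = 0 ∧ c₃ = 0) →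
      (∀ x : E, ∃ c₁ c₂ c₃ : E, c₁ ^ q = c₁ ∧ c₂ ^ q = c₂ ∧ c₃ ^ q = c₃ ∧
        x = c₁ * b₁ + c₂ * b₂ + c₃ * b₃) →
      ∃ s : E, s ^ q = s ∧ s ≠ 0 ∧
        Matrix.det !![T (b₁ * b₁), T (b₁ * b₂), T (b₁ * b₃);
                      T (b₂ * b₁), T (b₂ * b₂), T (b₂ * b₃);
                      T (b₃ * b₁), T (b₃ * b₂), T (b₃ * b₃)] = s ^ 2 := by
  have hq2 : 2 ≤ q := by
    rw [hq]
    exact le_trans hp.two_le (Nat.le_self_pow hh.ne' p)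
  -- characteristic of E is p
  haveI := ringChar.charP E
  obtain ⟨n, hrprime, hcard⟩ := FiniteField.card E (ringChar E)
  have hpchar : ringChar E = p := by
    have hdvd : p ∣ (ringChar E) ^ (n : ℕ) := by
      rw [← hcard, hE, hq, ← pow_mul]
      exact dvd_pow_self p (by positivity)
    exact ((Nat.prime_dvd_prime_iff_eq hp hrprime).mp (hp.dvd_of_dvd_pow hdvd)).symm
  haveI : CharP E p := hpchar ▸ ringChar.charP E
  haveI : Fact p.Prime := ⟨hp⟩
  -- basic power identities
  have hqq : ∀ x : E, (x ^ q) ^ q = x ^ q ^ 2 := fun x => by rw [← pow_mul, sq]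
  have hcube : ∀ x : E, (x ^ q ^ 2) ^ q = x := fun x => by
    rw [← pow_mul, (by ring : q ^ 2 * q = q ^ 3), ← hE, FiniteField.pow_card]
  have hadd : ∀ x y : E, (x + y) ^ q = x ^ q + y ^ q := by
    intro x y
    rw [hq]
    exact add_pow_char_pow p h (x := x) (y := y)
  -- nonzero value of the trace
  have hTne : ∃ y : E, T y ≠ 0 := by
    by_contra h'
    push_neg at h'
    have := aux_lin hq2 hE 1 1 1 (fun x => by
      have hx := h' x; rw [hT] at hx; linear_combination hx)
    exact one_ne_zero this.1
  have part1 : ∀ x : E, (∀ y : E, T (x * y) = 0) → x = 0 := by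
    intro x hx
    by_contra hx0
    obtain ⟨y, hy⟩ := hTne
    apply hy
    have := hx (x⁻¹ * y)
    rwa [← mul_assoc, mul_inv_cancel₀ hx0, one_mul] at this
  refine ⟨part1, ?_⟩
  intro b₁ b₂ b₃ hli hspan
  set V : Matrix (Fin 3) (Fin 3) E :=
    !![b₁, b₂, b₃; b₁ ^ q, b₂ ^ q, b₃ ^ q; b₁ ^ q ^ 2, b₂ ^ q ^ 2, b₃ ^ q ^ 2] with hV
  refine ⟨V.det, ?_, ?_, ?_⟩
  · -- s ^ q = s
    have hσ : ∀ x : E, iterateFrobenius E p h x = x ^ q := fun x => by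
      rw [iterateFrobenius_def, hq]
    rw [hq, ← iterateFrobenius_def (R := E) (p := p) (n := h), RingHom.map_det]
    rw [Matrix.det_fin_three, Matrix.det_fin_three]
    simp only [hV, Matrix.map_apply]
    simp [hσ, hqq, hcube]
    ring
  · -- s ≠ 0
    intro hs0
    obtain ⟨v, hv0, hv⟩ := Matrix.exists_vecMul_eq_zero_iff.mpr hs0
    have hrow : ∀ i, Matrix.vecMul v V i = 0 := fun i => congrFun hv i
    have h0 := hrow 0
    have h1 := hrow 1
    have h2 := hrow 2
    simp [hV, Matrix.vecMul, dotProduct, Fin.sum_univ_three] at h0 h1 h2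
    -- the linearized polynomial with coefficients v kills every element of E
    have hall : ∀ x : E, v 0 * x + v 1 * x ^ q + v 2 * x ^ q ^ 2 = 0 := by
      intro x
      obtain ⟨c₁, c₂, c₃, hc₁, hc₂, hc₃, rfl⟩ := hspan x
      have e1 : (c₁ * b₁ + c₂ * b₂ + c₃ * b₃) ^ q
          = c₁ * b₁ ^ q + c₂ * b₂ ^ q + c₃ * b₃ ^ q := by
        rw [hadd, hadd, mul_pow, mul_pow, mul_pow, hc₁, hc₂, hc₃]
      have e2 : (c₁ * b₁ + c₂ * b₂ + c₃ * b₃) ^ q ^ 2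
          = c₁ * b₁ ^ q ^ 2 + c₂ * b₂ ^ q ^ 2 + c₃ * b₃ ^ q ^ 2 := by
        rw [← hqq, e1, hadd, hadd, mul_pow, mul_pow, mul_pow, hc₁, hc₂, hc₃, hqq, hqq, hqq]
      rw [e1, e2]
      linear_combination c₁ * h0 + c₂ * h1 + c₃ * h2
    obtain ⟨z0, z1, z2⟩ := aux_lin hq2 hE (v 0) (v 1) (v 2) hall
    apply hv0
    funext i
    fin_cases i <;> simpa
  · -- the Gram determinant is the square of det V
    simp only [hT, mul_pow]
    rw [Matrix.det_fin_three, Matrix.det_fin_three]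
    simp [hV]
    ring
end

section
/- Assume q ≡ 1 (mod 4) and q ≢ 1 (mod 3). Let a, b, c ∈ E* be pairwise distinct with N(a) = N(b) = N(c) = 1 and T(a²) = T(b²) = T(c²) = 0. Then 2·T(ab)·T(ac)·T(bc) is a nonzero square in F. -/
/-!
Attach to `x ∈ E` its vector of conjugates `v x = (x, x^q, x^{q²})`, so that
`T(xy) = v x ⬝ v y` and the hypotheses say that `v a`, `v b`, `v c` are isotropic.
For `s = det(v a, v b, v c)` the Gram determinant gives
`s² = det [[0, T(ab), T(ac)], [T(ab), 0, T(bc)], [T(ac), T(bc), 0]] = 2 T(ab) T(ac) T(bc)`,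
and `s^q = s` because the Frobenius permutes the columns cyclically.
Finally `T(xy) ≠ 0` for `x ≠ y`: two orthogonal isotropic vectors in a nondegenerate
3-dimensional quadratic space are proportional, so `y = μ x` with `μ ∈ F`, and then
`μ³ = N(y) / N(x) = 1` forces `μ = 1` because `3 ∤ q - 1`.
-/

open Matrix

section IsotropicVectors

variable {R : Type*} [CommRing R]

lemma sq_det_of_isotropic {u v w : Fin 3 → R} (hu : u ⬝ᵥ u = 0) (hv : v ⬝ᵥ v = 0)
    (hw : w ⬝ᵥ w = 0) :
    (of ![u, v, w]).det ^ 2 = 2 * (u ⬝ᵥ v) * (u ⬝ᵥ w) * (v ⬝ᵥ w) := by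
  have hgram : (of ![u, v, w]).det ^ 2 = (of ![u, v, w] * (of ![u, v, w])ᵀ).det := by
    rw [det_mul, det_transpose, sq]
  have hentry : ∀ i j,
      (of ![u, v, w] * (of ![u, v, w])ᵀ) i j = ![u, v, w] i ⬝ᵥ ![u, v, w] j := fun _ _ => rfl
  rw [hgram, det_fin_three]
  simp only [hentry, cons_val_zero, cons_val_one, cons_val, hu, hv, hw, dotProduct_comm v u,
    dotProduct_comm w u, dotProduct_comm w v]
  ring

lemma minor_eq_zero_of_isotropic [IsReduced R] {u v : Fin 3 → R} (hu : u ⬝ᵥ u = 0)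
    (hv : v ⬝ᵥ v = 0) (huv : u ⬝ᵥ v = 0) : u 0 * v 1 - u 1 * v 0 = 0 := by
  simp only [dotProduct, Fin.sum_univ_three] at hu hv huv
  refine (pow_eq_zero_iff two_ne_zero).mp ?_
  linear_combination (v 0 ^ 2 + v 1 ^ 2) * hu - u 2 ^ 2 * hv +
    (u 2 * v 2 - u 0 * v 0 - u 1 * v 1) * huv

end IsotropicVectors

lemma eq_one_of_pow_three_eq_one {M : Type*} [Monoid M] {μ : M} {q : ℕ} (hq3 : q % 3 ≠ 1)
    (h3 : μ ^ 3 = 1) (hq : μ ^ q = μ) : μ = 1 := by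
  rw [pow_eq_pow_mod q h3] at hq
  have hmod : q % 3 = 0 ∨ q % 3 = 2 := by omega
  rcases hmod with h0 | h2
  · rwa [h0, pow_zero, eq_comm] at hq
  · rw [h2, sq] at hq
    exact (IsUnit.of_pow_eq_one h3 three_ne_zero).mul_eq_left.mp hq

section Conjugates

variable {R : Type*} [CommRing R]

def conjVec (q : ℕ) (x : R) : Fin 3 → R := ![x, x ^ q, x ^ q ^ 2]

lemma conjVec_dotProduct_conjVec (q : ℕ) (x y : R) :
    conjVec q x ⬝ᵥ conjVec q y = (x * y) ^ q ^ 2 + (x * y) ^ q + x * y := by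
  simp only [conjVec, dotProduct, Fin.sum_univ_three, cons_val_zero, cons_val_one, cons_val,
    mul_pow]
  ring

lemma det_conjVec_pow_eq_self {q : ℕ} (φ : R →+* R) (hφ : ∀ x, φ x = x ^ q)
    (hcube : ∀ x : R, x ^ q ^ 3 = x) (a b c : R) :
    (of ![conjVec q a, conjVec q b, conjVec q c]).det ^ q =
      (of ![conjVec q a, conjVec q b, conjVec q c]).det := by
  have hrot : φ.mapMatrix (of ![conjVec q a, conjVec q b, conjVec q c]) =
      (of ![conjVec q a, conjVec q b, conjVec q c]).submatrix id (finRotate 3) := by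
    ext i j
    fin_cases i <;> fin_cases j <;> simp [conjVec, hφ, ← pow_mul, ← pow_succ, ← sq, hcube]
  rw [← hφ, RingHom.map_det, hrot, det_permute', sign_finRotate]
  norm_num

end Conjugates

lemma eq_of_conjVec_orthogonal {K : Type*} [Field K] {q : ℕ} (hq3 : q % 3 ≠ 1) {x y : K}
    (hx : x ^ (q ^ 2 + q + 1) = 1) (hy : y ^ (q ^ 2 + q + 1) = 1)
    (hxx : conjVec q x ⬝ᵥ conjVec q x = 0) (hyy : conjVec q y ⬝ᵥ conjVec q y = 0)
    (hxy : conjVec q x ⬝ᵥ conjVec q y = 0) : x = y := by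
  have hx0 : x ≠ 0 := by rintro rfl; simp at hx
  have hminor : x * y ^ q - x ^ q * y = 0 := minor_eq_zero_of_isotropic hxx hyy hxy
  have hμq : (y / x) ^ q = y / x := by
    rw [div_pow, div_eq_div_iff (pow_ne_zero q hx0) hx0]
    linear_combination hminor
  have hμ3 : (y / x) ^ 3 = 1 := calc
    (y / x) ^ 3 = (y / x) ^ (q ^ 2 + q + 1) := by
      rw [pow_add, pow_add, sq q, pow_mul, hμq, hμq]; ring
    _ = 1 := by rw [div_pow, hx, hy, div_one]
  rw [eq_comm, ← div_eq_one_iff_eq hx0]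
  exact eq_one_of_pow_three_eq_one hq3 hμ3 hμq

theorem stmt_7_general {p h q : ℕ} (hp : p.Prime) (hq : q = p ^ h)
    (hq4 : q % 4 = 1) (hq3 : q % 3 ≠ 1)
    {E : Type*} [Field E] [Fintype E] (hE : Fintype.card E = q ^ 3)
    (T N : E → E)
    (hT : ∀ x, T x = x ^ q ^ 2 + x ^ q + x)
    (hN : ∀ x, N x = x ^ (q ^ 2 + q + 1))
    (a b c : E)
    (hab : a ≠ b) (hac : a ≠ c) (hbc : b ≠ c)
    (hNa : N a = 1) (hNb : N b = 1) (hNc : N c = 1)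
    (hTa : T (a ^ 2) = 0) (hTb : T (b ^ 2) = 0) (hTc : T (c ^ 2) = 0) :
    ∃ s : E, s ^ q = s ∧ s ≠ 0 ∧
      2 * T (a * b) * T (a * c) * T (b * c) = s ^ 2 := by
  have : Fact p.Prime := ⟨hp⟩
  have : CharP E p := charP_of_card_eq_prime_pow (f := h * 3) (by rw [hE, hq, pow_mul])
  have hTdot : ∀ x y, T (x * y) = conjVec q x ⬝ᵥ conjVec q y := fun x y => by
    rw [hT, conjVec_dotProduct_conjVec]
  have hiso : ∀ x, T (x ^ 2) = 0 → conjVec q x ⬝ᵥ conjVec q x = 0 := fun x hx => by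
    rwa [← hTdot, ← sq]
  have hTne : ∀ x y, N x = 1 → N y = 1 → T (x ^ 2) = 0 → T (y ^ 2) = 0 → x ≠ y →
      T (x * y) ≠ 0 := fun x y hx hy hxx hyy hxy hxy0 =>
    hxy (eq_of_conjVec_orthogonal hq3 (hN x ▸ hx) (hN y ▸ hy) (hiso x hxx) (hiso y hyy)
      (hTdot x y ▸ hxy0))
  have h2 : (2 : E) ≠ 0 := Ring.two_ne_zero fun h2 => by
    have := FiniteField.even_card_iff_char_two.mp h2
    rw [hE, Nat.pow_mod] at this
    have hodd : q % 2 = 1 := by omega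
    simp [hodd] at this
  have hsq := sq_det_of_isotropic (hiso a hTa) (hiso b hTb) (hiso c hTc)
  refine ⟨_, det_conjVec_pow_eq_self (iterateFrobenius E p h) (fun x => ?_) (fun x => ?_) a b c,
    ?_, ?_⟩
  · rw [iterateFrobenius_def, hq]
  · rw [← hE]; exact FiniteField.pow_card x
  · rw [← pow_ne_zero_iff two_ne_zero, hsq, ← hTdot, ← hTdot, ← hTdot]
    exact mul_ne_zero (mul_ne_zero (mul_ne_zero h2 (hTne a b hNa hNb hTa hTb hab))
      (hTne a c hNa hNc hTa hTc hac)) (hTne b c hNb hNc hTb hTc hbc)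
  · rw [hsq, hTdot, hTdot, hTdot]

/-- Let `q = p^h` be a prime power with `q ≡ 1 (mod 4)` and
`q ≢ 1 (mod 3)`, `E = 𝔽_{q³}`, `T x = x^{q²} + x^q + x` the relative trace and
`N x = x^{q²+q+1}` the relative norm.  If `a, b, c ∈ E*` are pairwise distinct
with `N a = N b = N c = 1` and `T(a²) = T(b²) = T(c²) = 0`, then
`2·T(ab)·T(ac)·T(bc)` is a nonzero square in the subfield `F = {x : x^q = x}`. -/
theorem stmt_7 {p h q : ℕ} (hp : p.Prime) (hh : 0 < h) (hq : q = p ^ h)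
    (hq4 : q % 4 = 1) (hq3 : q % 3 ≠ 1)
    {E : Type*} [Field E] [Fintype E] (hE : Fintype.card E = q ^ 3)
    (T N : E → E)
    (hT : ∀ x, T x = x ^ q ^ 2 + x ^ q + x)
    (hN : ∀ x, N x = x ^ (q ^ 2 + q + 1))
    (a b c : E) (ha : a ≠ 0) (hb : b ≠ 0) (hc : c ≠ 0)
    (hab : a ≠ b) (hac : a ≠ c) (hbc : b ≠ c)
    (hNa : N a = 1) (hNb : N b = 1) (hNc : N c = 1)
    (hTa : T (a ^ 2) = 0) (hTb : T (b ^ 2) = 0) (hTc : T (c ^ 2) = 0) :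
    ∃ s : E, s ^ q = s ∧ s ≠ 0 ∧
      2 * T (a * b) * T (a * c) * T (b * c) = s ^ 2 :=
  stmt_7_general hp hq hq4 hq3 hE T N hT hN a b c hab hac hbc hNa hNb hNc hTa hTb hTc
end

section
/- Let p be a prime, q = p^h, F = 𝔽_q and E = 𝔽_{q³}. Let ψ be a nontrivial additive character of 𝔽_p with values in ℂ, and let ψ_F = ψ ∘ Tr_{F/𝔽_p} and ψ_E = ψ ∘ Tr_{E/𝔽_p} be the induced additive characters of F and E. Let χ be a multiplicative character of E with values in ℂ (extended by χ(0) = 0) whose restriction χ|_F to the subfield F is nontrivial. Then G(χ|_F, ψ_F) · ( Σ_{x ∈ E} conj(χ)(T(x)) · χ(x) ) = (q − 1) · G(χ, ψ_E), where G(·,·) denotes the Gauss sum Σ_t χ(t)ψ(t), T(x) = x^{q²} + x^q + x is the relative trace from E to F, and conj(χ)(T(x)) means the conjugate character applied to the image of T(x) in E (with value 0 when T(x) = 0). Equivalently, Σ_{x ∈ E} conj(χ)(T(x))·χ(x) = (q − 1)·G(χ, ψ_E)/G(χ|_F, ψ_F). -/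
/-!
Twisting the Gauss sum of `χ|_F` by `s ∈ F` multiplies it by `χ⁻¹ s`; this holds also for
`s = 0` because `χ|_F` is nontrivial. Hence `G(χ|_F, ψ_F) · χ⁻¹(Tr x) = Σ_t χ(t) ψ_F(t · Tr x)`.
Summing against `χ x` and substituting `x ↦ t x`, every `t ≠ 0` contributes one copy of
`G(χ, ψ_F ∘ Tr_{E/F})`, since `Tr_{E/F}` is `F`-linear. Over finite fields `T = Tr_{E/F}` and
`ψ_F ∘ Tr_{E/F} = ψ_E` by transitivity of the trace.
-/

open Finset

namespace MulChar

variable {R S R' G : Type*} [CommMonoid R] [CommMonoid S] [CommMonoidWithZero R']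
  [FunLike G R S] [MonoidHomClass G R S]

def comp (χ : MulChar S R') (f : G) [IsLocalHom f] : MulChar R R' where
  toMonoidHom := χ.toMonoidHom.comp f
  map_nonunit' a ha := χ.map_nonunit fun hu => ha (IsLocalHom.map_nonunit a hu)

@[simp]
theorem comp_apply (χ : MulChar S R') (f : G) [IsLocalHom f] (a : R) :
    χ.comp f a = χ (f a) :=
  rfl

theorem inv_comp (χ : MulChar S R') (f : G) [IsLocalHom f] :
    (χ.comp f)⁻¹ = χ⁻¹.comp f := by
  ext a
  simp only [inv_apply_eq_inv, comp_apply]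

end MulChar

section

variable {R R' : Type*} [Field R] [Fintype R] [CommRing R'] [IsDomain R']

theorem gaussSum_mulShift_eq_of_ne_one {χ : MulChar R R'} (hχ : χ ≠ 1) (ψ : AddChar R R')
    (a : R) : gaussSum χ (ψ.mulShift a) = χ⁻¹ a * gaussSum χ ψ := by
  rcases eq_or_ne a 0 with rfl | ha
  · rw [AddChar.mulShift_zero, gaussSum_one_right hχ, MulChar.map_zero, zero_mul]
  · exact gaussSum_mulShift_eq χ ψ (Units.mk0 a ha)

end

section

variable {F E R : Type*} [Field F] [Fintype F] [Field E] [Fintype E] [Algebra F E]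
  [CommRing R] [IsDomain R]

local notation "ι" => algebraMap F E

theorem gaussSum_comp_mul_sum_inv_trace (χ : MulChar E R) (ψ : AddChar F R)
    (hχ : χ.comp ι ≠ 1) :
    gaussSum (χ.comp ι) ψ * ∑ x, χ⁻¹ (ι (Algebra.trace F E x)) * χ x
      = (Fintype.card F - 1 : ℕ) *
          gaussSum χ (ψ.compAddMonoidHom (Algebra.trace F E).toAddMonoidHom) := by
  classical
  set ψE := ψ.compAddMonoidHom (Algebra.trace F E).toAddMonoidHom
  have trace_smul (t : F) (x : E) : Algebra.trace F E (ι t * x) = t * Algebra.trace F E x := by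
    rw [← Algebra.smul_def, map_smul, smul_eq_mul]
  calc gaussSum (χ.comp ι) ψ * ∑ x, χ⁻¹ (ι (Algebra.trace F E x)) * χ x
      = ∑ x, χ x * gaussSum (χ.comp ι) (ψ.mulShift (Algebra.trace F E x)) := by
        simp only [gaussSum_mulShift_eq_of_ne_one hχ, MulChar.inv_comp, MulChar.comp_apply,
          mul_sum]
        exact sum_congr rfl fun x _ => by ring
    _ = ∑ t, χ (ι t) * gaussSum χ (ψE.mulShift (ι t)) := by
        simp only [gaussSum, mul_sum, AddChar.mulShift_apply, MulChar.comp_apply]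
        rw [sum_comm]
        refine sum_congr rfl fun t _ => sum_congr rfl fun x _ => ?_
        rw [AddChar.compAddMonoidHom_apply, LinearMap.toAddMonoidHom_coe, trace_smul, mul_comm t,
          mul_left_comm]
    _ = ∑ t ∈ univ.erase (0 : F), gaussSum χ ψE := by
        rw [← sum_erase univ (a := 0)]
        · exact sum_congr rfl fun t ht =>
            gaussSum_mulShift _ _ (Units.mk0 (ι t) (by simpa using ne_of_mem_erase ht))
        · rw [map_zero, MulChar.map_zero, zero_mul]
    _ = (Fintype.card F - 1 : ℕ) * gaussSum χ ψE := by
        rw [sum_const, card_erase_of_mem (mem_univ _), card_univ, nsmul_eq_mul]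

end

theorem stmt_8_general {p q : ℕ} (hp : p.Prime)
    {F E : Type*} [Field F] [Fintype F] [Field E] [Fintype E]
    [Algebra F E] [Algebra (ZMod p) F] [Algebra (ZMod p) E]
    (hF : Fintype.card F = q) (hdim : Module.finrank F E = 3)
    (T : E → E) (hT : ∀ x, T x = x ^ q ^ 2 + x ^ q + x)
    (ψ : AddChar (ZMod p) ℂ)
    (χ : MulChar E ℂ)
    (hχF : ∃ t : F, t ≠ 0 ∧ χ (algebraMap F E t) ≠ 1) :
    (∑ t : F, χ (algebraMap F E t) * ψ (Algebra.trace (ZMod p) F t)) *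
        (∑ x : E, (starRingEnd ℂ) (χ (T x)) * χ x)
      = (q - 1 : ℕ) * ∑ t : E, χ t * ψ (Algebra.trace (ZMod p) E t) := by
  have : Fact p.Prime := ⟨hp⟩
  have : IsScalarTower (ZMod p) F E := .of_algebraMap_eq' (RingHom.ext_zmod _ _)
  have hT_trace (x : E) : T x = algebraMap F E (Algebra.trace F E x) := by
    rw [hT, FiniteField.algebraMap_trace_eq_sum_pow, hdim, Nat.card_eq_fintype_card, hF]
    simp only [sum_range_succ, sum_range_zero, pow_zero, pow_one, zero_add]
    ring
  have hχ : χ.comp (algebraMap F E) ≠ 1 := by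
    obtain ⟨t, ht, hχt⟩ := hχF
    exact MulChar.ne_one_iff.mpr ⟨Units.mk0 t ht, hχt⟩
  have key := gaussSum_comp_mul_sum_inv_trace χ
    (ψ.compAddMonoidHom (Algebra.trace (ZMod p) F).toAddMonoidHom) hχ
  simpa [gaussSum, hT_trace, starRingEnd_apply, MulChar.star_apply', hF] using key

/-- Lemma on ratios of Gauss sums.  Let `p` be a prime,
`q = p^h`, `F = 𝔽_q` and `E = 𝔽_{q³}`.  Let `ψ` be a nontrivial additive
character of `𝔽_p = ZMod p` with values in `ℂ`, inducing the additive characters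
`ψ_F = ψ ∘ Tr_{F/𝔽_p}` and `ψ_E = ψ ∘ Tr_{E/𝔽_p}`.  Let `χ` be a multiplicative
character of `E` (with `χ 0 = 0`) whose restriction to the subfield `F` is
nontrivial, and let `T x = x^{q²} + x^q + x` be the relative trace from `E` to `F`.
Then `G(χ|_F, ψ_F) · (Σ_{x ∈ E} conj(χ)(T x) · χ x) = (q − 1) · G(χ, ψ_E)`,
where `G(·,·)` is the Gauss sum. -/
theorem stmt_8 {p h q : ℕ} (hp : p.Prime) (hh : 0 < h) (hq : q = p ^ h)
    {F E : Type*} [Field F] [Fintype F] [Field E] [Fintype E]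
    [Algebra F E] [Algebra (ZMod p) F] [Algebra (ZMod p) E]
    (hF : Fintype.card F = q) (hdim : Module.finrank F E = 3)
    (T : E → E) (hT : ∀ x, T x = x ^ q ^ 2 + x ^ q + x)
    (ψ : AddChar (ZMod p) ℂ) (hψ : ψ ≠ 1)
    (χ : MulChar E ℂ)
    (hχF : ∃ t : F, t ≠ 0 ∧ χ (algebraMap F E t) ≠ 1) :
    (∑ t : F, χ (algebraMap F E t) * ψ (Algebra.trace (ZMod p) F t)) *
        (∑ x : E, (starRingEnd ℂ) (χ (T x)) * χ x)
      = (q - 1 : ℕ) * ∑ t : E, χ t * ψ (Algebra.trace (ZMod p) E t) :=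
  stmt_8_general hp hF hdim T hT ψ χ hχF
end

section
/- Let a, b ∈ E* with N(a) = N(b) = 1 and T(a²) = T(b²) = 0, and let 0 ≤ s ≤ 3. Then κ_s(a², b²) = κ_{i^s·χ₂(2)}(ab) + ((q − 1)/4)·ε_{ab}, where ε_{ab} is the number of indices j with 0 ≤ j < q² + q + 1 such that T(μ^j·ab) = 0 and T(μ^{−j}·ab) = 0 (note χ₂(2) ∈ {1, −1}, so i^s·χ₂(2) ∈ {1, i, −1, −i}). -/
open scoped Classical


private lemma orderOf_I' : orderOf (Complex.I) = 4 := by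
  haveI : Fact (Nat.Prime 2) := ⟨Nat.prime_two⟩
  have h1 : ¬ Complex.I ^ (2:ℕ) ^ (1:ℕ) = 1 := by norm_num [Complex.I_sq]
  have h2 : Complex.I ^ (2:ℕ) ^ (1+1:ℕ) = 1 := by norm_num [Complex.I_pow_four]
  have := orderOf_eq_prime_pow h1 h2
  norm_num at this
  exact this

private lemma pow_eq_pow_iff_modEq₀ {G₀ : Type*} [GroupWithZero G₀] {x : G₀} (hx : x ≠ 0)
    {n m : ℕ} : x ^ n = x ^ m ↔ n ≡ m [MOD orderOf x] := by
  have := pow_eq_pow_iff_modEq (x := Units.mk0 x hx) (n := n) (m := m)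
  rw [show orderOf (Units.mk0 x hx) = orderOf x from by rw [← orderOf_units, Units.val_mk0]] at this
  rw [← this]
  simp [Units.ext_iff]

private lemma I_pow_iff (a b : ℕ) :
    Complex.I ^ a = Complex.I ^ b ↔ ((a : ZMod 4) = (b : ZMod 4)) := by
  rw [pow_eq_pow_iff_modEq₀ Complex.I_ne_zero, orderOf_I', ZMod.natCast_eq_natCast_iff]

private lemma count_mul4 {r e : ℕ} (he : e < 4 * r) :
    ((Finset.range r).filter fun k => 4 * k = e).card = if 4 ∣ e then 1 else 0 := by
  split_ifs with h
  · obtain ⟨k0, rfl⟩ := h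
    have : (Finset.range r).filter (fun k => 4 * k = 4 * k0) = {k0} := by
      ext k
      simp only [Finset.mem_filter, Finset.mem_range, Finset.mem_singleton]
      omega
    rw [this, Finset.card_singleton]
  · rw [Finset.card_eq_zero, Finset.filter_eq_empty_iff]
    intro k _
    omega

private def zp {E : Type*} [Field E] (μ : E) (m : ℕ) (n : ZMod m) : E := μ ^ n.val

section zpsec
variable {E : Type*} [Field E] {μ : E} {m : ℕ}

private lemma mu_ne_zero (hμ : orderOf μ = m) (hm : 0 < m) : μ ≠ 0 := by
  intro h
  have h1 : μ ^ m = 1 := by rw [← hμ]; exact pow_orderOf_eq_one μ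
  rw [h, zero_pow hm.ne'] at h1
  exact zero_ne_one h1

private lemma zp_natCast (hμ : orderOf μ = m) (hm : 0 < m) (i : ℕ) :
    μ ^ i = zp μ m (i : ZMod m) := by
  haveI : NeZero m := ⟨hm.ne'⟩
  unfold zp
  rw [pow_eq_pow_iff_modEq₀ (mu_ne_zero hμ hm), hμ, ZMod.val_natCast, Nat.ModEq]
  exact (Nat.mod_mod_of_dvd i dvd_rfl).symm

private lemma zp_add (hμ : orderOf μ = m) (hm : 0 < m) (x y : ZMod m) :
    zp μ m (x + y) = zp μ m x * zp μ m y := by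
  haveI : NeZero m := ⟨hm.ne'⟩
  unfold zp
  rw [← pow_add, pow_eq_pow_iff_modEq₀ (mu_ne_zero hμ hm), hμ,
    ← ZMod.natCast_eq_natCast_iff]
  push_cast
  simp [ZMod.natCast_val, ZMod.cast_id]

private lemma zp_inv (hμ : orderOf μ = m) (hm : 0 < m) (i : ℕ) :
    μ⁻¹ ^ i = zp μ m (-(i : ZMod m)) := by
  haveI : NeZero m := ⟨hm.ne'⟩
  have h1 : zp μ m ((i : ZMod m)) * zp μ m (-(i : ZMod m)) = 1 := by
    rw [← zp_add hμ hm, add_neg_cancel]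
    simp [zp]
  rw [inv_pow, zp_natCast hμ hm i]
  exact (eq_inv_of_mul_eq_one_left (by rw [mul_comm] at h1; exact h1)).symm

end zpsec

private lemma sum_range_zmod {m : ℕ} [NeZero m] (f : ZMod m → ℕ) :
    ∑ i ∈ Finset.range m, f (i : ZMod m) = ∑ j : ZMod m, f j := by
  exact Finset.sum_nbij' (fun a => ((a : ZMod m))) (fun z => z.val)
    (fun a _ => Finset.mem_univ _)
    (fun z _ => Finset.mem_range.mpr (ZMod.val_lt z))
    (fun a ha => by
      show ((a : ZMod m)).val = a
      rw [ZMod.val_natCast, Nat.mod_eq_of_lt (Finset.mem_range.mp ha)])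
    (fun z _ => by
      show ((z.val : ℕ) : ZMod m) = z
      simp [ZMod.natCast_val, ZMod.cast_id])
    (fun a _ => rfl)

private lemma key_count {E : Type*} [Field E]
    (q r m n2 s : ℕ) (α ω : E) (χ₄ χ₂ : E → ℂ)
    (hr : 0 < r)
    (hordω : orderOf ω = 4 * r)
    (hω : ω = α ^ m)
    (hneg : ω ^ (2 * r) = (-1 : E))
    (hrep : ∀ X : E, X ≠ 0 → X ^ q = X → ∃ t, X = ω ^ t)
    (hχ₄0 : χ₄ 0 = 0) (hχ₄ : ∀ n : ℕ, χ₄ (α ^ n) = Complex.I ^ n)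
    (hchi2 : χ₂ 2 = Complex.I ^ (2 * n2))
    (hm4 : ((m : ZMod 4)) = 3)
    (hrn : ((2 * r : ℕ) : ZMod 4) = ((2 * n2 : ℕ) : ZMod 4))
    (X Y : E) (hX : X ^ q = X) (hY : Y ^ q = Y) :
    (∑ k ∈ Finset.range r, if X = -ω ^ (4 * k + s) * Y then 1 else 0)
      = (if χ₄ X * (starRingEnd ℂ) (χ₄ Y)
            = (starRingEnd ℂ) (Complex.I ^ s * χ₂ 2) then 1 else 0)
        + r * (if X = 0 ∧ Y = 0 then 1 else 0) := by
  have hω0 : ω ≠ 0 := mu_ne_zero hordω (by omega)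
  have hconjpow : ∀ n : ℕ, (starRingEnd ℂ) (Complex.I ^ n) = Complex.I ^ (3 * n) := by
    intro n
    rw [map_pow, Complex.conj_I, show (-Complex.I) = Complex.I ^ 3 by
      rw [pow_succ, Complex.I_sq]; ring, ← pow_mul]
  have hz' : (starRingEnd ℂ) (Complex.I ^ s * χ₂ 2)
      = Complex.I ^ (3 * s + 3 * (2 * n2)) := by
    rw [hchi2, map_mul, hconjpow, hconjpow, ← pow_add]
  have hzne : (starRingEnd ℂ) (Complex.I ^ s * χ₂ 2) ≠ 0 := by
    rw [hz']; exact pow_ne_zero _ Complex.I_ne_zero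
  have hchi2ne : χ₂ 2 ≠ 0 := by
    rw [hchi2]; exact pow_ne_zero _ Complex.I_ne_zero
  by_cases hY0 : Y = 0
  · by_cases hX0 : X = 0
    · rw [hX0, hY0]
      simp [hχ₄0, Ne.symm hzne, hchi2ne]
    · rw [hY0]
      simp [hχ₄0, hX0, Ne.symm hzne, hchi2ne]
  · by_cases hX0 : X = 0
    · rw [hX0]
      have hne : ∀ k : ℕ, -ω ^ (4 * k + s) * Y ≠ 0 := fun k =>
        mul_ne_zero (neg_ne_zero.mpr (pow_ne_zero _ hω0)) hY0
      simp only [hχ₄0, zero_mul, Ne.symm hzne, if_false, hY0, and_false, mul_zero, add_zero]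
      refine Finset.sum_eq_zero fun k _ => ?_
      rw [if_neg (fun h => hne k h.symm)]
    · -- both nonzero
      obtain ⟨t1, ht1⟩ := hrep X hX0 hX
      obtain ⟨t2, ht2⟩ := hrep Y hY0 hY
      haveI : NeZero (4 * r) := ⟨by omega⟩
      set δ : ZMod (4 * r) := (t1 : ZMod (4 * r)) - ((2 * r : ℕ) : ZMod (4 * r))
        - (s : ZMod (4 * r)) - (t2 : ZMod (4 * r)) with hδ
      have step1 : ∀ k : ℕ, k < r → ((X = -ω ^ (4 * k + s) * Y) ↔ (4 * k = δ.val)) := by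
        intro k hk
        rw [ht1, ht2]
        have hrw : -ω ^ (4 * k + s) * ω ^ t2 = ω ^ (2 * r + (4 * k + s) + t2) := by
          rw [pow_add ω (2 * r + (4 * k + s)) t2, pow_add ω (2 * r) (4 * k + s), hneg]; ring
        rw [hrw, pow_eq_pow_iff_modEq₀ hω0, hordω, ← ZMod.natCast_eq_natCast_iff]
        have hcast : (((4 * k : ℕ) : ZMod (4 * r)) = δ)
            ↔ ((t1 : ZMod (4 * r)) = ((2 * r + (4 * k + s) + t2 : ℕ) : ZMod (4 * r))) := by
          rw [hδ]
          push_cast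
          constructor <;> intro h <;> linear_combination -h
        rw [← hcast]
        constructor
        · intro h
          have h2 := congrArg ZMod.val h
          rwa [ZMod.val_natCast, Nat.mod_eq_of_lt (by omega)] at h2
        · intro h
          rw [h]
          simp [ZMod.natCast_val, ZMod.cast_id]
      have hsum : (∑ k ∈ Finset.range r, if X = -ω ^ (4 * k + s) * Y then 1 else 0)
          = ((Finset.range r).filter fun k => 4 * k = δ.val).card := by
        rw [Finset.card_filter]
        exact Finset.sum_congr rfl fun k hk => by
          rw [if_congr (step1 k (Finset.mem_range.mp hk)) rfl rfl]
      rw [hsum, count_mul4 (ZMod.val_lt δ)]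
      have hchi : χ₄ X * (starRingEnd ℂ) (χ₄ Y)
          = Complex.I ^ (m * t1 + 3 * (m * t2)) := by
        rw [ht1, ht2, hω, ← pow_mul, ← pow_mul, hχ₄, hχ₄, hconjpow, ← pow_add]
      have hvalcast : ((δ.val : ℕ) : ZMod 4)
          = (t1 : ZMod 4) - ((2 * r : ℕ) : ZMod 4) - (s : ZMod 4) - (t2 : ZMod 4) := by
        have hdvd : (4 : ℕ) ∣ 4 * r := ⟨r, rfl⟩
        have h1 : ((δ.val : ℕ) : ZMod (4 * r)) = δ := by
          simp [ZMod.natCast_val, ZMod.cast_id]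
        calc ((δ.val : ℕ) : ZMod 4)
            = (ZMod.castHom hdvd (ZMod 4)) ((δ.val : ℕ) : ZMod (4 * r)) := by
              rw [map_natCast]
          _ = (ZMod.castHom hdvd (ZMod 4)) δ := by rw [h1]
          _ = _ := by rw [hδ]; simp only [map_sub, map_natCast]
      have hiff : (4 ∣ δ.val) ↔ (χ₄ X * (starRingEnd ℂ) (χ₄ Y)
          = (starRingEnd ℂ) (Complex.I ^ s * χ₂ 2)) := by
        rw [hchi, hz', I_pow_iff, ← ZMod.natCast_eq_zero_iff, hvalcast]
        have h4 : (4 : ZMod 4) = 0 := by decide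
        have hrn' := hrn
        push_cast at hrn' ⊢
        rw [hm4]
        constructor
        · intro h
          linear_combination 3 * h + 3 * hrn' + (3 * (t2 : ZMod 4)) * h4
        · intro h
          linear_combination 3 * h - hrn'
            + (-2 * (t1 : ZMod 4) - 7 * (t2 : ZMod 4) + 2 * (s : ZMod 4)
                + 4 * (n2 : ZMod 4)) * h4
      rw [if_congr hiff rfl rfl]
      simp [hX0]

private lemma shift_sum {m : ℕ} [NeZero m] (F : ZMod m → ZMod m → ℕ) (A B : ZMod m) :
    (∑ j : ZMod m, F (j + (A + A)) (-j + (B + B)))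
      = ∑ j : ZMod m, F (j + (A + B)) (-j + (A + B)) := by
  rw [← Equiv.sum_comp (Equiv.addRight (B - A))
    (fun j => F (j + (A + A)) (-j + (B + B)))]
  refine Finset.sum_congr rfl fun j _ => ?_
  simp only [Equiv.coe_addRight]
  congr 1 <;> ring

private lemma neg_sum {m : ℕ} [NeZero m] (F : ZMod m → ZMod m → ℕ) (c : ZMod m) :
    (∑ j : ZMod m, F (j + c) (-j + c)) = ∑ j : ZMod m, F (-j + c) (j + c) := by
  rw [← Equiv.sum_comp (Equiv.neg (ZMod m)) (fun j => F (j + c) (-j + c))]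
  refine Finset.sum_congr rfl fun j _ => ?_
  simp only [Equiv.neg_apply, neg_neg]

private lemma conj_swap (P Q z : ℂ) :
    Q * (starRingEnd ℂ) P = z ↔ P * (starRingEnd ℂ) Q = (starRingEnd ℂ) z := by
  constructor <;> intro h
  · have h2 := congrArg (starRingEnd ℂ) h
    rw [map_mul, Complex.conj_conj] at h2
    rw [← h2]; ring
  · have h2 := congrArg (starRingEnd ℂ) h
    rw [map_mul, Complex.conj_conj, Complex.conj_conj] at h2
    rw [← h2]; ring


/-- Let `q = p^h` be a prime power with `q ≡ 1 (mod 4)` and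
`q ≢ 1 (mod 3)`, `E = 𝔽_{q³}`, `T` the relative trace and `N` the relative norm.
Fix a generator `α` of `E*`, put `ω = α^{q²+q+1}` and `μ = α^{q−1}`, and let `χ₄`
be the quartic character (`χ₄ 0 = 0`, `χ₄ (α^n) = i^n`) and `χ₂ = χ₄²`.  For
`z ∈ {1, i, −1, −i}` let `κ_z(x)` count the `0 ≤ i < q² + q + 1` with
`χ₄(T(μ^i x))·conj(χ₄(T(μ^{−i} x))) = z`; for `0 ≤ s ≤ 3` let `κ_s(a, b)` count
the pairs `(k, i)` with `0 ≤ k < (q−1)/4`, `0 ≤ i < q² + q + 1` and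
`T(μ^i a) = −ω^{4k+s}·T(μ^{−i} b)`; and let `ε_{x}` count the
`0 ≤ j < q² + q + 1` with `T(μ^j x) = T(μ^{−j} x) = 0`.  If `a, b ∈ E*` satisfy
`N a = N b = 1` and `T(a²) = T(b²) = 0`, then for `0 ≤ s ≤ 3`
`κ_s(a², b²) = κ_{i^s·χ₂(2)}(ab) + ((q − 1)/4)·ε_{ab}`. -/
theorem stmt_13 {p u q : ℕ} (hp : p.Prime) (hu : 0 < u) (hq : q = p ^ u)
    (hq4 : q % 4 = 1) (hq3 : q % 3 ≠ 1)
    {E : Type*} [Field E] [Fintype E] (hE : Fintype.card E = q ^ 3)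
    (T N : E → E)
    (hT : ∀ x, T x = x ^ q ^ 2 + x ^ q + x)
    (hN : ∀ x, N x = x ^ (q ^ 2 + q + 1))
    (α : E) (hα : orderOf α = q ^ 3 - 1)
    (ω : E) (hω : ω = α ^ (q ^ 2 + q + 1))
    (μ : E) (hμ : μ = α ^ (q - 1))
    (χ₄ : E → ℂ) (hχ₄0 : χ₄ 0 = 0) (hχ₄ : ∀ n : ℕ, χ₄ (α ^ n) = Complex.I ^ n)
    (χ₂ : E → ℂ) (hχ₂ : ∀ x, χ₂ x = χ₄ x ^ 2)
    (κ : ℂ → E → ℕ)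
    (hκ : ∀ z x, κ z x = ((Finset.range (q ^ 2 + q + 1)).filter fun i =>
        χ₄ (T (μ ^ i * x)) * (starRingEnd ℂ) (χ₄ (T (μ⁻¹ ^ i * x))) = z).card)
    (κpair : ℕ → E → E → ℕ)
    (hκpair : ∀ s a b, κpair s a b =
      (((Finset.range ((q - 1) / 4)) ×ˢ (Finset.range (q ^ 2 + q + 1))).filter
        fun ki => T (μ ^ ki.2 * a) = -ω ^ (4 * ki.1 + s) * T (μ⁻¹ ^ ki.2 * b)).card)
    (ε : E → ℕ)
    (hε : ∀ x, ε x = ((Finset.range (q ^ 2 + q + 1)).filter fun j =>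
        T (μ ^ j * x) = 0 ∧ T (μ⁻¹ ^ j * x) = 0).card) :
    ∀ a b : E, a ≠ 0 → b ≠ 0 → N a = 1 → N b = 1 →
      T (a ^ 2) = 0 → T (b ^ 2) = 0 → ∀ s : ℕ, s ≤ 3 →
      κpair s (a ^ 2) (b ^ 2)
        = κ (Complex.I ^ s * χ₂ 2) (a * b) + (q - 1) / 4 * ε (a * b) := by
  intro a b ha hb hNa hNb hTa hTb s hs
  obtain ⟨m, hm⟩ : ∃ m', m' = q ^ 2 + q + 1 := ⟨_, rfl⟩
  rw [← hm] at hN hω hκ hκpair hε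
  obtain ⟨r, hrdef⟩ : ∃ r', r' = (q - 1) / 4 := ⟨_, rfl⟩
  rw [← hrdef] at hκpair ⊢
  -- numerology
  have hq2 : 2 ≤ q := by
    rw [hq]
    calc 2 = 2 ^ 1 := (pow_one 2).symm
    _ ≤ 2 ^ u := Nat.pow_le_pow_right (by norm_num) hu
    _ ≤ p ^ u := Nat.pow_le_pow_left hp.two_le u
  have hq5 : 5 ≤ q := by omega
  have hr4 : q - 1 = 4 * r := by omega
  have hr0 : 0 < r := by omega
  have hm0 : 0 < m := by rw [hm]; positivity
  have hqm : q * m = q ^ 3 + q ^ 2 + q := by rw [hm]; ring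
  have hq3ge : q ≤ q ^ 3 := Nat.le_self_pow (by norm_num) q
  have hcard13 : q ^ 3 - 1 = (q - 1) * m := by
    have h1 : (q - 1) * m = q * m - m := by rw [Nat.sub_mul, one_mul]
    rw [h1, hqm, hm]
    have h2 : q ≤ q ^ 2 := Nat.le_self_pow (by norm_num) q
    omega
  have hord_pos : 0 < q ^ 3 - 1 := by omega
  -- characteristic
  obtain ⟨p', hp'⟩ := CharP.exists E
  haveI := hp'
  obtain ⟨nn, hpn, hcardE⟩ := FiniteField.card E p'
  have hpp' : p = p' := by
    have h1 : p ∣ p' ^ (nn : ℕ) := by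
      rw [← hcardE, hE, hq, ← pow_mul]
      exact dvd_pow_self p (by positivity)
    exact (Nat.prime_dvd_prime_iff_eq hp hpn).mp (hp.dvd_of_dvd_pow h1)
  subst hpp'
  haveI : Fact p.Prime := ⟨hp⟩
  have hfrob : ∀ x y : E, (x + y) ^ q = x ^ q + y ^ q := by
    intro x y; rw [hq]; exact add_pow_char_pow (p := p) (n := u) (x := x) (y := y)
  have hpow3 : ∀ x : E, x ^ q ^ 3 = x := fun x => by rw [← hE]; exact FiniteField.pow_card x
  have hTfix : ∀ x : E, T x ^ q = T x := by
    intro x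
    rw [hT x, hfrob, hfrob, ← pow_mul, ← pow_mul,
      show q ^ 2 * q = q ^ 3 by ring, show q * q = q ^ 2 by ring, hpow3 x]
    ring
  have hα0 : α ≠ 0 := mu_ne_zero hα hord_pos
  -- discrete logarithm
  have hdlog : ∀ y : E, y ≠ 0 → ∃ n : ℕ, y = α ^ n := by
    intro y hy
    have hou : orderOf (Units.mk0 α hα0) = q ^ 3 - 1 := by
      rw [← orderOf_units, Units.val_mk0]; exact hα
    have htop : Subgroup.zpowers (Units.mk0 α hα0) = ⊤ := by
      apply Subgroup.eq_top_of_card_eq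
      rw [Nat.card_zpowers, hou, Nat.card_eq_fintype_card, Fintype.card_units, hE]
    have hmem : Units.mk0 y hy ∈ Subgroup.zpowers (Units.mk0 α hα0) := by
      rw [htop]; exact Subgroup.mem_top _
    rw [← mem_powers_iff_mem_zpowers] at hmem
    obtain ⟨n, hn⟩ := hmem
    refine ⟨n, ?_⟩
    have h2 := congrArg Units.val hn
    simpa using h2.symm
  -- orders of μ and ω
  have hordμ : orderOf μ = m := by
    rw [hμ, orderOf_pow' α (show q - 1 ≠ 0 by omega), hα, hcard13, Nat.gcd_comm,
      Nat.gcd_eq_left (dvd_mul_right (q - 1) m),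
      Nat.mul_div_cancel_left m (show 0 < q - 1 by omega)]
  have hordω : orderOf ω = 4 * r := by
    rw [hω, orderOf_pow' α hm0.ne', hα, hcard13, Nat.gcd_comm,
      Nat.gcd_eq_left (dvd_mul_left m (q - 1)), Nat.mul_div_cancel _ hm0, hr4]
  have hω0 : ω ≠ 0 := mu_ne_zero hordω (by omega)
  have hneg : ω ^ (2 * r) = -1 := by
    have h2 : ω ^ (2 * r) * ω ^ (2 * r) = 1 := by
      rw [← pow_add, show 2 * r + 2 * r = 4 * r by ring, ← hordω]
      exact pow_orderOf_eq_one ω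
    rcases mul_self_eq_one_iff.mp h2 with h | h
    · exact absurd h (pow_ne_one_of_lt_orderOf (by omega) (by rw [hordω]; omega))
    · exact h
  have hrep : ∀ X : E, X ≠ 0 → X ^ q = X → ∃ t, X = ω ^ t := by
    intro X h0 hfix
    obtain ⟨n, hn⟩ := hdlog X h0
    have h1 : X ^ (q - 1) = 1 := by
      have h2 : X ^ (q - 1) * X = 1 * X := by
        rw [one_mul, ← pow_succ, show q - 1 + 1 = q by omega, hfix]
      exact mul_right_cancel₀ h0 h2
    have h3 : α ^ (n * (q - 1)) = 1 := by rw [pow_mul, ← hn, h1]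
    have h4 : (q - 1) * m ∣ n * (q - 1) := by
      rw [← hcard13, ← hα]; exact orderOf_dvd_of_pow_eq_one h3
    have h5 : m ∣ n := by
      rw [mul_comm n] at h4
      exact (Nat.mul_dvd_mul_iff_left (show 0 < q - 1 by omega)).mp h4
    obtain ⟨t, ht⟩ := h5
    exact ⟨t, by rw [hn, ht, pow_mul, ← hω]⟩
  -- norm-one elements are powers of μ
  have hnormpow : ∀ y : E, y ≠ 0 → N y = 1 → ∃ A : ℕ, y = μ ^ A := by
    intro y hy hNy
    obtain ⟨n, hn⟩ := hdlog y hy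
    have hym : y ^ m = 1 := by rw [← hN y]; exact hNy
    have h1 : α ^ (n * m) = 1 := by rw [pow_mul, ← hn]; exact hym
    have h2 : (q - 1) * m ∣ n * m := by
      rw [← hcard13, ← hα]; exact orderOf_dvd_of_pow_eq_one h1
    have h3 : (q - 1) ∣ n := (Nat.mul_dvd_mul_iff_right hm0).mp h2
    obtain ⟨A, hA⟩ := h3
    exact ⟨A, by rw [hn, hA, pow_mul, ← hμ]⟩
  obtain ⟨A, hAa⟩ := hnormpow a ha hNa
  obtain ⟨B, hBb⟩ := hnormpow b hb hNb
  -- 2 as a power of α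
  have h2ne : (2 : E) ≠ 0 := by
    intro h
    have hdvd2 : (p : ℕ) ∣ 2 := (CharP.cast_eq_zero_iff E p 2).mp (by exact_mod_cast h)
    have hp2 : p = 2 := (Nat.prime_dvd_prime_iff_eq hp Nat.prime_two).mp hdvd2
    have h2q : 2 ∣ q := by
      rw [hq, ← hp2]; exact dvd_pow_self p hu.ne'
    omega
  obtain ⟨n2, hn2⟩ := hdlog 2 h2ne
  have hchi2v : χ₂ 2 = Complex.I ^ (2 * n2) := by
    rw [hχ₂, hn2, hχ₄, ← pow_mul, mul_comm]
  -- parity comparison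
  have hq8 : q % 8 = 1 ∨ q % 8 = 5 := by omega
  have hq3mod : q ^ 3 % 8 = q % 8 := by
    rcases hq8 with h | h <;> rw [Nat.pow_mod, h] <;> first | rfl | norm_num
  have hsq_iff : IsSquare (2 : E) ↔ q % 8 = 1 := by
    rw [FiniteField.isSquare_two_iff, hE, hq3mod]
    omega
  have hsq_n2 : IsSquare (2 : E) ↔ Even n2 := by
    constructor
    · rintro ⟨y, hy⟩
      have hy0 : y ≠ 0 := by
        intro h; rw [h, mul_zero] at hy; exact h2ne hy
      obtain ⟨k, hk⟩ := hdlog y hy0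
      have h1 : α ^ n2 = α ^ (k + k) := by rw [← hn2, hy, hk, pow_add]
      rw [pow_eq_pow_iff_modEq₀ hα0, hα] at h1
      have heven2 : 2 ∣ q ^ 3 - 1 := by
        have hq21 : q % 2 = 1 := by omega
        have hodd : q ^ 3 % 2 = 1 := by rw [Nat.pow_mod, hq21]
        omega
      have h2' := Nat.ModEq.of_dvd heven2 h1
      rw [Nat.ModEq] at h2'
      rw [Nat.even_iff]
      omega
    · rintro ⟨k, hk⟩
      exact ⟨α ^ k, by rw [hn2, hk, pow_add]⟩
  have hrn : ((2 * r : ℕ) : ZMod 4) = ((2 * n2 : ℕ) : ZMod 4) := by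
    rw [ZMod.natCast_eq_natCast_iff]
    have h1 := hsq_n2.symm.trans hsq_iff
    have hpar : r % 2 = n2 % 2 := by
      rcases hq8 with h | h
      · have he : Even n2 := h1.mpr h
        rw [Nat.even_iff] at he
        omega
      · have hne : n2 % 2 ≠ 0 := by
          intro h0
          have := h1.mp (Nat.even_iff.mpr h0)
          omega
        omega
    show 2 * r % 4 = 2 * n2 % 4
    omega
  have hm4 : ((m : ℕ) : ZMod 4) = 3 := by
    have hq1 : ((q : ℕ) : ZMod 4) = 1 := by
      rw [← ZMod.natCast_mod, hq4]; norm_num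
    rw [hm]; push_cast; rw [hq1]; norm_num
  -- ZMod m machinery
  haveI : NeZero m := ⟨hm0.ne'⟩
  have hh1 : ∀ i : ℕ, μ ^ i * a ^ 2
      = zp μ m ((i : ZMod m) + ((A : ZMod m) + (A : ZMod m))) := by
    intro i
    rw [hAa, ← pow_mul, ← pow_add, zp_natCast hordμ hm0 (i + A * 2)]
    congr 1
    push_cast; ring
  have hh2 : ∀ i : ℕ, μ⁻¹ ^ i * b ^ 2
      = zp μ m (-(i : ZMod m) + ((B : ZMod m) + (B : ZMod m))) := by
    intro i
    rw [hBb, ← pow_mul, zp_inv hordμ hm0 i, zp_natCast hordμ hm0 (B * 2),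
      ← zp_add hordμ hm0]
    congr 1
    push_cast; ring
  have hh3 : ∀ j : ℕ, μ ^ j * (a * b)
      = zp μ m ((j : ZMod m) + ((A : ZMod m) + (B : ZMod m))) := by
    intro j
    rw [hAa, hBb, ← pow_add, ← pow_add, zp_natCast hordμ hm0 (j + (A + B))]
    congr 1
    push_cast; ring
  have hh4 : ∀ j : ℕ, μ⁻¹ ^ j * (a * b)
      = zp μ m (-(j : ZMod m) + ((A : ZMod m) + (B : ZMod m))) := by
    intro j
    rw [hAa, hBb, ← pow_add, zp_inv hordμ hm0 j, zp_natCast hordμ hm0 (A + B),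
      ← zp_add hordμ hm0]
    congr 1
    push_cast; ring
  -- κpair as a ZMod m sum
  have HP : κpair s (a ^ 2) (b ^ 2)
      = ∑ j : ZMod m, ∑ k ∈ Finset.range r,
          if T (zp μ m (j + ((A : ZMod m) + (B : ZMod m))))
              = -ω ^ (4 * k + s) * T (zp μ m (-j + ((A : ZMod m) + (B : ZMod m))))
            then 1 else 0 := by
    rw [hκpair s (a ^ 2) (b ^ 2), Finset.card_filter]
    rw [Finset.sum_product, Finset.sum_comm]
    have step1 : (∑ i ∈ Finset.range m, ∑ k ∈ Finset.range r,
        if T (μ ^ i * a ^ 2) = -ω ^ (4 * k + s) * T (μ⁻¹ ^ i * b ^ 2) then 1 else 0)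
        = ∑ i ∈ Finset.range m, (fun j : ZMod m => ∑ k ∈ Finset.range r,
            if T (zp μ m (j + ((A : ZMod m) + (A : ZMod m))))
                = -ω ^ (4 * k + s) * T (zp μ m (-j + ((B : ZMod m) + (B : ZMod m))))
              then 1 else 0) ((i : ZMod m)) := by
      refine Finset.sum_congr rfl fun i _ => ?_
      refine Finset.sum_congr rfl fun k _ => ?_
      rw [hh1 i, hh2 i]
    exact step1.trans ((sum_range_zmod _).trans
      (shift_sum (fun x y => ∑ k ∈ Finset.range r,
        if T (zp μ m x) = -ω ^ (4 * k + s) * T (zp μ m y) then 1 else 0)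
        (A : ZMod m) (B : ZMod m)))
  -- κ as a ZMod m sum
  have HK : κ (Complex.I ^ s * χ₂ 2) (a * b)
      = ∑ j : ZMod m,
          if χ₄ (T (zp μ m (j + ((A : ZMod m) + (B : ZMod m)))))
              * (starRingEnd ℂ) (χ₄ (T (zp μ m (-j + ((A : ZMod m) + (B : ZMod m))))))
              = (starRingEnd ℂ) (Complex.I ^ s * χ₂ 2) then 1 else 0 := by
    rw [hκ (Complex.I ^ s * χ₂ 2) (a * b), Finset.card_filter]
    have step1 : (∑ i ∈ Finset.range m,
        if χ₄ (T (μ ^ i * (a * b))) * (starRingEnd ℂ) (χ₄ (T (μ⁻¹ ^ i * (a * b))))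
            = Complex.I ^ s * χ₂ 2 then 1 else 0)
        = ∑ i ∈ Finset.range m, (fun j : ZMod m =>
            if χ₄ (T (zp μ m (j + ((A : ZMod m) + (B : ZMod m)))))
                * (starRingEnd ℂ) (χ₄ (T (zp μ m (-j + ((A : ZMod m) + (B : ZMod m))))))
                = Complex.I ^ s * χ₂ 2 then 1 else 0) ((i : ZMod m)) := by
      refine Finset.sum_congr rfl fun i _ => ?_
      rw [hh3 i, hh4 i]
    have step2 := (sum_range_zmod (fun j : ZMod m =>
        if χ₄ (T (zp μ m (j + ((A : ZMod m) + (B : ZMod m)))))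
            * (starRingEnd ℂ) (χ₄ (T (zp μ m (-j + ((A : ZMod m) + (B : ZMod m))))))
            = Complex.I ^ s * χ₂ 2 then 1 else 0))
    have step3 := neg_sum (fun x y =>
        if χ₄ (T (zp μ m x)) * (starRingEnd ℂ) (χ₄ (T (zp μ m y)))
            = Complex.I ^ s * χ₂ 2 then 1 else 0)
        ((A : ZMod m) + (B : ZMod m))
    have step4 : (∑ j : ZMod m,
        if χ₄ (T (zp μ m (-j + ((A : ZMod m) + (B : ZMod m)))))
            * (starRingEnd ℂ) (χ₄ (T (zp μ m (j + ((A : ZMod m) + (B : ZMod m))))))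
            = Complex.I ^ s * χ₂ 2 then 1 else 0)
        = ∑ j : ZMod m,
          if χ₄ (T (zp μ m (j + ((A : ZMod m) + (B : ZMod m)))))
              * (starRingEnd ℂ) (χ₄ (T (zp μ m (-j + ((A : ZMod m) + (B : ZMod m))))))
              = (starRingEnd ℂ) (Complex.I ^ s * χ₂ 2) then 1 else 0 := by
      refine Finset.sum_congr rfl fun j _ => ?_
      rw [if_congr (conj_swap _ _ _) rfl rfl]
    exact step1.trans (step2.trans (step3.trans step4))
  -- ε as a ZMod m sum
  have HE : ε (a * b)
      = ∑ j : ZMod m,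
          if T (zp μ m (j + ((A : ZMod m) + (B : ZMod m)))) = 0
              ∧ T (zp μ m (-j + ((A : ZMod m) + (B : ZMod m)))) = 0 then 1 else 0 := by
    rw [hε (a * b), Finset.card_filter]
    have step1 : (∑ i ∈ Finset.range m,
        if T (μ ^ i * (a * b)) = 0 ∧ T (μ⁻¹ ^ i * (a * b)) = 0 then 1 else 0)
        = ∑ i ∈ Finset.range m, (fun j : ZMod m =>
            if T (zp μ m (j + ((A : ZMod m) + (B : ZMod m)))) = 0
                ∧ T (zp μ m (-j + ((A : ZMod m) + (B : ZMod m)))) = 0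
              then 1 else 0) ((i : ZMod m)) := by
      refine Finset.sum_congr rfl fun i _ => ?_
      rw [hh3 i, hh4 i]
    exact step1.trans (sum_range_zmod (fun j : ZMod m =>
      if T (zp μ m (j + ((A : ZMod m) + (B : ZMod m)))) = 0
          ∧ T (zp μ m (-j + ((A : ZMod m) + (B : ZMod m)))) = 0 then 1 else 0))
  -- pointwise key identity
  have HKey : ∀ j : ZMod m,
      (∑ k ∈ Finset.range r,
          if T (zp μ m (j + ((A : ZMod m) + (B : ZMod m))))
              = -ω ^ (4 * k + s) * T (zp μ m (-j + ((A : ZMod m) + (B : ZMod m))))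
            then 1 else 0)
        = (if χ₄ (T (zp μ m (j + ((A : ZMod m) + (B : ZMod m)))))
              * (starRingEnd ℂ) (χ₄ (T (zp μ m (-j + ((A : ZMod m) + (B : ZMod m))))))
              = (starRingEnd ℂ) (Complex.I ^ s * χ₂ 2) then 1 else 0)
          + r * (if T (zp μ m (j + ((A : ZMod m) + (B : ZMod m)))) = 0
              ∧ T (zp μ m (-j + ((A : ZMod m) + (B : ZMod m)))) = 0 then 1 else 0) :=
    fun j => key_count q r m n2 s α ω χ₄ χ₂ hr0 hordω hω hneg hrep hχ₄0 hχ₄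
      hchi2v hm4 hrn _ _ (hTfix _) (hTfix _)
  rw [HP, HK, HE, Finset.mul_sum, ← Finset.sum_add_distrib]
  exact Finset.sum_congr rfl fun j _ => HKey j
end
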